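/- Let A, A_k be n×n max-plus matrices with A_k ≤ A entrywise, each row of A_k having exactly one finite entry, and λ₁ ∈ ℝ. Define B_k = A_k⁻ (A ⊕ λ₁ I) and assume Tr(B_k) ≤ 𝟙. Then for any regular u ∈ ℝⁿ, the vector x = B_k* u satisfies x ≤ λ₁⁻¹ A x. -/

import Mathlib

open Finset

/-- The max-plus identity matrix: `0` on the diagonal, `-∞` elsewhere. -/
noncomputable def mpId (n : ℕ) : Fin n → Fin n → WithBot ℝ :=
  fun i j => if i = j then ((0 : ℝ) : WithBot ℝ) else ⊥

/-- Max-plus matrix multiplication. -/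
noncomputable def mpMul {n : ℕ} (A B : Fin n → Fin n → WithBot ℝ) :
    Fin n → Fin n → WithBot ℝ :=
  fun i j => univ.sup fun k => A i k + B k j

/-- Max-plus matrix power. -/
noncomputable def mpPow {n : ℕ} (A : Fin n → Fin n → WithBot ℝ) :
    ℕ → Fin n → Fin n → WithBot ℝ
  | 0 => mpId n
  | m + 1 => mpMul A (mpPow A m)

/-- Max-plus trace: the maximum diagonal entry. -/
noncomputable def mpTr {n : ℕ} (A : Fin n → Fin n → WithBot ℝ) : WithBot ℝ :=
  univ.sup fun i => A i i

/-- The Kleene star `A* = I ⊕ A ⊕ ⋯ ⊕ A^(n-1)`. -/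
noncomputable def mpStar {n : ℕ} (A : Fin n → Fin n → WithBot ℝ) :
    Fin n → Fin n → WithBot ℝ :=
  fun i j => (range n).sup fun m => mpPow A m i j

/-- Conjugate transpose: entry `(i,j)` is `-a_{ji}` if `a_{ji} ≠ -∞`, else `-∞`. -/
noncomputable def mpConj {m n : ℕ} (A : Fin m → Fin n → WithBot ℝ) :
    Fin n → Fin m → WithBot ℝ :=
  fun i j => WithBot.map (fun a => -a) (A j i)

/-- Max-plus matrix-vector product. -/
noncomputable def mpMulVec {n : ℕ} (A : Fin n → Fin n → WithBot ℝ)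
    (x : Fin n → WithBot ℝ) : Fin n → WithBot ℝ :=
  fun i => univ.sup fun j => A i j + x j

/-!
Every row of `A_k` has a finite entry, so `A A_k⁻` has nonnegative diagonal and therefore
`λ₁ ≤ (A B_k)ᵢᵢ`; this gives `λ₁ + (B_kᵐ u)ᵢ ≤ (A B_kᵐ⁺¹ u)ᵢ`. For `m < n` the power `B_kᵐ⁺¹` lies
below `B_k*`: trivially if `m + 1 < n`, and for `m + 1 = n` because the trace condition allows
deleting a cycle from every walk of length `n`.
-/

section

variable {n : ℕ}

theorem add_finset_sup {ι : Type*} (c : WithBot ℝ) (s : Finset ι) (f : ι → WithBot ℝ) :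
    c + s.sup f = s.sup fun a => c + f a :=
  apply_sup_eq_sup_comp_of_linearOrder (c + ·) (fun _ _ h => add_le_add_right h c)
    (WithBot.add_bot c)

theorem finset_sup_add {ι : Type*} (s : Finset ι) (f : ι → WithBot ℝ) (c : WithBot ℝ) :
    s.sup f + c = s.sup fun a => f a + c := by
  simp only [add_comm _ c, add_finset_sup]

theorem le_neg_coe_add_iff {a b : WithBot ℝ} (l : ℝ) :
    a ≤ ((-l : ℝ) : WithBot ℝ) + b ↔ (l : WithBot ℝ) + a ≤ b := by
  rw [← WithBot.add_le_add_iff_left (WithBot.coe_ne_bot (a := l)), ← add_assoc,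
    ← WithBot.coe_add, add_neg_cancel, WithBot.coe_zero, zero_add]

section Algebra

variable (A B C : Fin n → Fin n → WithBot ℝ)

theorem mpMul_assoc : mpMul (mpMul A B) C = mpMul A (mpMul B C) := by
  funext i j
  simp only [mpMul, finset_sup_add, add_finset_sup, add_assoc]
  exact Finset.sup_comm _ _ _

theorem mpMulVec_mpMul (v : Fin n → WithBot ℝ) :
    mpMulVec (mpMul A B) v = mpMulVec A (mpMulVec B v) := by
  funext i
  simp only [mpMulVec, mpMul, finset_sup_add, add_finset_sup, add_assoc]
  exact Finset.sup_comm _ _ _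

theorem mpMulVec_mpStar (v : Fin n → WithBot ℝ) (i : Fin n) :
    mpMulVec (mpStar A) v i = (range n).sup fun m => mpMulVec (mpPow A m) v i := by
  simp only [mpMulVec, mpStar, finset_sup_add]
  exact Finset.sup_comm _ _ _

variable {A B}

theorem mpMulVec_apply_le_of_le (h : ∀ i j, A i j ≤ B i j) (v : Fin n → WithBot ℝ) (i : Fin n) :
    mpMulVec A v i ≤ mpMulVec B v i :=
  Finset.sup_mono_fun fun j _ => add_le_add_left (h i j) _

theorem mpMulVec_mono {v w : Fin n → WithBot ℝ} (h : ∀ j, v j ≤ w j) (i : Fin n) :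
    mpMulVec A v i ≤ mpMulVec A w i :=
  Finset.sup_mono_fun fun j _ => add_le_add_right (h j) _

end Algebra

theorem exists_lt_le_apply_eq (p : ℕ → Fin n) : ∃ s t, s < t ∧ t ≤ n ∧ p s = p t := by
  obtain ⟨a, b, hab, hp⟩ :=
    Fintype.exists_ne_map_eq_of_card_lt (fun t : Fin (n + 1) => p t) (by simp)
  rcases Fin.lt_or_lt_of_ne hab with h | h
  · exact ⟨a, b, h, Nat.lt_succ_iff.1 b.isLt, hp⟩
  · exact ⟨b, a, h, Nat.lt_succ_iff.1 a.isLt, hp.symm⟩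

section Paths

variable (B : Fin n → Fin n → WithBot ℝ)

def pathWeight (m : ℕ) (p : ℕ → Fin n) : WithBot ℝ :=
  ∑ t ∈ range m, B (p t) (p (t + 1))

theorem pathWeight_succ (m : ℕ) (p : ℕ → Fin n) :
    pathWeight B (m + 1) p = B (p 0) (p 1) + pathWeight B m fun t => p (t + 1) := by
  rw [pathWeight, sum_range_succ', add_comm]
  rfl

theorem pathWeight_add (a b : ℕ) (p : ℕ → Fin n) :
    pathWeight B (a + b) p = pathWeight B a p + pathWeight B b fun t => p (a + t) := by
  simp only [pathWeight, sum_range_add, add_assoc]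

theorem pathWeight_le_mpPow : ∀ (m : ℕ) (p : ℕ → Fin n), pathWeight B m p ≤ mpPow B m (p 0) (p m)
  | 0, p => by simp [pathWeight, mpPow, mpId]
  | m + 1, p => by
    rw [pathWeight_succ]
    calc _ ≤ B (p 0) (p 1) + mpPow B m (p 1) (p (m + 1)) :=
          add_le_add_right (pathWeight_le_mpPow m fun t => p (t + 1)) _
      _ ≤ mpPow B (m + 1) (p 0) (p (m + 1)) :=
          le_sup (f := fun k => B (p 0) k + mpPow B m k (p (m + 1))) (mem_univ (p 1))

/-- The offset `w` lets the induction peel off the first edge without subtracting its weight. -/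
theorem add_mpPow_le_of_forall_add_pathWeight_le {j : Fin n} {c : WithBot ℝ} :
    ∀ (m : ℕ) (i : Fin n) (w : WithBot ℝ),
      (∀ p : ℕ → Fin n, p 0 = i → p m = j → w + pathWeight B m p ≤ c) → w + mpPow B m i j ≤ c
  | 0, i, w, h => by
    by_cases hij : i = j
    · simpa [pathWeight, mpPow, mpId, hij] using h (fun _ => i) rfl hij
    · simp [mpPow, mpId, hij]
  | m + 1, i, w, h => by
    simp only [mpPow, mpMul, add_finset_sup]
    refine Finset.sup_le fun k _ => ?_
    rw [← add_assoc]
    refine add_mpPow_le_of_forall_add_pathWeight_le m k _ fun q hq0 hqm => ?_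
    have := h (fun | 0 => i | t + 1 => q t) rfl hqm
    rw [pathWeight_succ, ← add_assoc] at this
    dsimp only at this
    rwa [hq0] at this

theorem mpPow_add_le (a b : ℕ) (i k j : Fin n) :
    mpPow B a i k + mpPow B b k j ≤ mpPow B (a + b) i j := by
  induction a generalizing i with
  | zero =>
    by_cases hik : i = k <;> simp [mpPow, mpId, hik]
  | succ a ih =>
    rw [Nat.add_right_comm]
    simp only [mpPow, mpMul, finset_sup_add]
    refine Finset.sup_le fun l _ => ?_
    rw [add_assoc]
    exact (add_le_add_right (ih l) _).trans
      (le_sup (f := fun l => B i l + mpPow B (a + b) l j) (mem_univ l))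

/-- Cycle removal: a walk of length `n` repeats a vertex, and the closed subwalk between the
repetitions weighs at most `0`. -/
theorem pathWeight_le_mpStar
    (hTr : ∀ m : ℕ, 1 ≤ m → m ≤ n → mpTr (mpPow B m) ≤ ((0 : ℝ) : WithBot ℝ)) (p : ℕ → Fin n) :
    pathWeight B n p ≤ mpStar B (p 0) (p n) := by
  obtain ⟨s, t, hst, htn, hps⟩ := exists_lt_le_apply_eq p
  obtain ⟨d, rfl⟩ : ∃ d, t = s + d := ⟨t - s, by omega⟩
  obtain ⟨e, rfl⟩ : ∃ e, n = s + d + e := ⟨n - (s + d), by omega⟩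
  have hcycle : pathWeight B d (fun r => p (s + r)) ≤ ((0 : ℝ) : WithBot ℝ) :=
    calc _ ≤ mpPow B d (p s) (p s) := by
          simpa [← hps] using pathWeight_le_mpPow B d fun r => p (s + r)
      _ ≤ mpTr (mpPow B d) := le_sup (f := fun k => mpPow B d k k) (mem_univ (p s))
      _ ≤ _ := hTr d (by omega) (by omega)
  calc _ = pathWeight B s p + pathWeight B d (fun r => p (s + r))
        + pathWeight B e (fun r => p (s + d + r)) := by
        rw [pathWeight_add, pathWeight_add]
    _ ≤ mpPow B s (p 0) (p s) + ((0 : ℝ) : WithBot ℝ) + mpPow B e (p s) (p (s + d + e)) := by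
        gcongr
        · exact pathWeight_le_mpPow B s p
        · rw [hps]
          exact pathWeight_le_mpPow B e _
    _ ≤ mpPow B (s + e) (p 0) (p (s + d + e)) := by
        rw [WithBot.coe_zero, add_zero]
        exact mpPow_add_le B s e _ _ _
    _ ≤ _ := le_sup (f := fun m => mpPow B m (p 0) (p (s + d + e))) (mem_range.2 (by omega))

theorem mpPow_le_mpStar
    (hTr : ∀ m : ℕ, 1 ≤ m → m ≤ n → mpTr (mpPow B m) ≤ ((0 : ℝ) : WithBot ℝ))
    {m : ℕ} (hm : m ≤ n) (i j : Fin n) : mpPow B m i j ≤ mpStar B i j := by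
  rcases hm.lt_or_eq with hm | rfl
  · exact le_sup (f := fun m => mpPow B m i j) (mem_range.2 hm)
  · simpa using add_mpPow_le_of_forall_add_pathWeight_le B m i 0 fun p hp0 hpm => by
      simpa [hp0, hpm] using pathWeight_le_mpStar B hTr p

end Paths

theorem zero_le_mpMul_mpConj_apply_self {A Ak : Fin n → Fin n → WithBot ℝ}
    (hle : ∀ i j, Ak i j ≤ A i j) {i : Fin n} (hi : ∃ j, Ak i j ≠ ⊥) :
    ((0 : ℝ) : WithBot ℝ) ≤ mpMul A (mpConj Ak) i i := by
  obtain ⟨j, hj⟩ := hi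
  obtain ⟨a, ha⟩ := WithBot.ne_bot_iff_exists.1 hj
  calc ((0 : ℝ) : WithBot ℝ) = (a : WithBot ℝ) + ((-a : ℝ) : WithBot ℝ) := by
        rw [← WithBot.coe_add, add_neg_cancel]
    _ ≤ A i j + mpConj Ak j i := by
        rw [mpConj, ← ha, WithBot.map_coe]
        exact add_le_add_left (ha ▸ hle i j) _
    _ ≤ mpMul A (mpConj Ak) i i := le_sup (f := fun k => A i k + mpConj Ak k i) (mem_univ j)

theorem coe_le_mpMul_mpMul_mpConj_apply_self {A Ak : Fin n → Fin n → WithBot ℝ}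
    (hle : ∀ i j, Ak i j ≤ A i j) {i : Fin n} (hi : ∃ j, Ak i j ≠ ⊥) (l : ℝ) :
    (l : WithBot ℝ) ≤ mpMul A (mpMul (mpConj Ak)
      (fun i j => A i j ⊔ if i = j then (l : WithBot ℝ) else ⊥)) i i := by
  rw [← mpMul_assoc]
  calc (l : WithBot ℝ) = ((0 : ℝ) : WithBot ℝ) + (l : WithBot ℝ) := by simp
    _ ≤ mpMul A (mpConj Ak) i i + (A i i ⊔ if i = i then (l : WithBot ℝ) else ⊥) := by
        gcongr
        · exact zero_le_mpMul_mpConj_apply_self hle hi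
        · simp
    _ ≤ _ := le_sup (f := fun k => mpMul A (mpConj Ak) i k +
          (A k i ⊔ if k = i then (l : WithBot ℝ) else ⊥)) (mem_univ i)

theorem add_le_mpMulVec_mpMulVec {A B : Fin n → Fin n → WithBot ℝ} {c : WithBot ℝ} {i : Fin n}
    (h : c ≤ mpMul A B i i) (w : Fin n → WithBot ℝ) :
    c + w i ≤ mpMulVec A (mpMulVec B w) i := by
  rw [← mpMulVec_mpMul]
  exact (add_le_add_left h _).trans (le_sup (f := fun j => mpMul A B i j + w j) (mem_univ i))

end

/-- Let `A_k ≤ A` have exactly one finite entry in each row, `λ₁ ∈ ℝ`, and set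
`B_k = A_k⁻ (A ⊕ λ₁ I)`. If `Tr(B_k) ≤ 𝟙`, then for any regular `u ∈ ℝⁿ`,
the vector `x = B_k* u` satisfies `x ≤ λ₁⁻¹ A x`. -/
theorem maxplus_Bk_star_solves (n : ℕ) (A Ak : Fin n → Fin n → WithBot ℝ)
    (hle : ∀ i j : Fin n, Ak i j ≤ A i j)
    (hrow : ∀ i : Fin n, ∃! j : Fin n, Ak i j ≠ ⊥)
    (l₁ : ℝ)
    (Bk : Fin n → Fin n → WithBot ℝ)
    (hBk : Bk = mpMul (mpConj Ak)
        (fun i j => A i j ⊔ (if i = j then ((l₁ : ℝ) : WithBot ℝ) else ⊥)))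
    (hTr : ∀ m : ℕ, 1 ≤ m → m ≤ n → mpTr (mpPow Bk m) ≤ ((0 : ℝ) : WithBot ℝ))
    (u : Fin n → ℝ) (x : Fin n → WithBot ℝ)
    (hx : x = mpMulVec (mpStar Bk) (fun j => ((u j : ℝ) : WithBot ℝ))) :
    ∀ i : Fin n, x i ≤ ((-l₁ : ℝ) : WithBot ℝ) + mpMulVec A x i := by
  intro i
  set v : Fin n → WithBot ℝ := fun j => ((u j : ℝ) : WithBot ℝ)
  have hdiag : (l₁ : WithBot ℝ) ≤ mpMul A Bk i i :=
    hBk ▸ coe_le_mpMul_mpMul_mpConj_apply_self hle (hrow i).exists l₁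
  have hxi : x i = (range n).sup fun m => mpMulVec (mpPow Bk m) v i := by
    rw [hx, mpMulVec_mpStar]
  rw [hxi]
  refine Finset.sup_le fun m hm => (le_neg_coe_add_iff l₁).2 ?_
  have hpow : ∀ j, mpMulVec (mpPow Bk (m + 1)) v j ≤ x j := fun j => by
    rw [hx]
    exact mpMulVec_apply_le_of_le (mpPow_le_mpStar Bk hTr (mem_range.1 hm)) v j
  calc (l₁ : WithBot ℝ) + mpMulVec (mpPow Bk m) v i
      ≤ mpMulVec A (mpMulVec Bk (mpMulVec (mpPow Bk m) v)) i := add_le_mpMulVec_mpMulVec hdiag _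
    _ = mpMulVec A (mpMulVec (mpPow Bk (m + 1)) v) i := by rw [mpPow, mpMulVec_mpMul]
    _ ≤ mpMulVec A x i := mpMulVec_mono hpow i
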